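/- arXiv:0902.0899 — 2 statements merged into one kernel-verified Lean document; each statement's English description precedes it below -/
import Mathlib

section
/- Truth lemma for the canonical model: in the canonical model M_C built from a maximal consistent set z, for every L_CSL-formula A, the set ‖A‖ = {x ∈ Δ | A ∈ x} equals the semantic extension A^{M_C} computed by the preferential truth conditions (Boolean clauses and (B ⇇ C)^{M_C} = {w | ∃x ∈ B^{M_C} ∀y ∈ C^{M_C}, x ≺_w y}). -/
/-- Formulas of the language L_CSL: propositional variables, ⊥, negation,
conjunction, and the comparative similarity connective `cls` (A ⇇ B). -/
inductive CSLForm : Type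
  | var : ℕ → CSLForm
  | bot : CSLForm
  | neg : CSLForm → CSLForm
  | and : CSLForm → CSLForm → CSLForm
  | cls : CSLForm → CSLForm → CSLForm

namespace CSLForm

def top : CSLForm := neg bot
def or (A B : CSLForm) : CSLForm := neg (and (neg A) (neg B))
def imp (A B : CSLForm) : CSLForm := or (neg A) B

end CSLForm

/-- A boolean valuation respecting the classical connectives
(⇇-formulas and variables are treated as atoms). -/
def IsBoolVal (v : CSLForm → Bool) : Prop :=
  v .bot = false ∧ (∀ A, v (.neg A) = !v A) ∧ (∀ A B, v (.and A B) = (v A && v B))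

/-- Classical tautologies of L_CSL. -/
def CSLTautology (A : CSLForm) : Prop := ∀ v, IsBoolVal v → v A = true

/-- The Hilbert system CSMS. -/
inductive CSMS : CSLForm → Prop
  | taut {A : CSLForm} : CSLTautology A → CSMS A
  | mp {A B : CSLForm} : CSMS (A.imp B) → CSMS A → CSMS B
  | mon {A B : CSLForm} (C : CSLForm) : CSMS (A.imp B) → CSMS ((A.cls C).imp (B.cls C))
  | ax1 (A B : CSLForm) : CSMS ((A.cls B).neg.or (B.cls A).neg)
  | ax2 (A B C : CSLForm) : CSMS ((A.cls B).imp ((A.cls C).or (C.cls B)))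
  | ax3 (A B : CSLForm) : CSMS ((A.and B.neg).imp (A.cls B))
  | ax4 (A B : CSLForm) : CSMS ((A.cls B).imp B.neg)
  | ax5 (A B C : CSLForm) : CSMS (((A.cls B).and (A.cls C)).imp (A.cls (B.or C)))
  | ax6 (A : CSLForm) : CSMS ((A.cls .bot).imp (((A.cls .bot).neg.cls .bot).neg))

/-- Semantic extension of a formula, given preferential relations
`pref w x y` (meaning x ≺_w y) and a valuation of propositional variables. -/
def prefEval {W : Type} (pref : W → W → W → Prop) (val : ℕ → Set W) :
    CSLForm → Set W
  | .var i => val i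
  | .bot => ∅
  | .neg A => (prefEval pref val A)ᶜ
  | .and A B => prefEval pref val A ∩ prefEval pref val B
  | .cls A B =>
      {w | ∃ x ∈ prefEval pref val A, ∀ y ∈ prefEval pref val B, pref w x y}

/-- A CSL-preferential model. -/
structure CSLPrefModel (W : Type) where
  ne : Nonempty W
  pref : W → W → W → Prop
  modular : ∀ w x y z, pref w x y → pref w z y ∨ pref w x z
  centered : ∀ w x, x = w ∨ pref w w x
  limit : ∀ w (X : Set W), X.Nonempty → {y ∈ X | ∀ z, pref w z y → z ∉ X}.Nonempty
  val : ℕ → Set W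

def CSLPrefModel.eval {W : Type} (M : CSLPrefModel W) : CSLForm → Set W :=
  prefEval M.pref M.val

/-- Distance from a point to a set, in ℝ≥0∞ (so that it is ∞ on the empty set). -/
noncomputable def setDist {W : Type} (d : W → W → ℝ) (w : W) (X : Set W) : ENNReal :=
  ⨅ x ∈ X, ENNReal.ofReal (d w x)

/-- A CSL-distance minspace model. -/
structure CSLMinModel (W : Type) where
  ne : Nonempty W
  dist : W → W → ℝ
  dist_nonneg : ∀ x y, 0 ≤ dist x y
  dist_eq_zero : ∀ x y, dist x y = 0 ↔ x = y
  min_attained : ∀ (w : W) (X : Set W), X.Nonempty → ∃ x ∈ X, ∀ y ∈ X, dist w x ≤ dist w y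
  val : ℕ → Set W

noncomputable def CSLMinModel.eval {W : Type} (M : CSLMinModel W) : CSLForm → Set W
  | .var i => M.val i
  | .bot => ∅
  | .neg A => (M.eval A)ᶜ
  | .and A B => M.eval A ∩ M.eval B
  | .cls A B => {w | setDist M.dist w (M.eval A) < setDist M.dist w (M.eval B)}

/-- Iterated disjunction of a list of formulas. -/
def bigOr : List CSLForm → CSLForm
  | [] => .bot
  | [A] => A
  | A :: B :: rest => A.or (bigOr (B :: rest))

/-- Iterated conjunction of a list of formulas. -/
def bigAnd : List CSLForm → CSLForm
  | [] => .top
  | [A] => A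
  | A :: B :: rest => A.and (bigAnd (B :: rest))

/-- Γ is inconsistent wrt CSMS: there are A₁,…,Aₙ ∈ Γ (n ≥ 1) with ⊢ ¬A₁ ⊔ … ⊔ ¬Aₙ. -/
def Inconsistent (Γ : Set CSLForm) : Prop :=
  ∃ L : List CSLForm, L ≠ [] ∧ (∀ A ∈ L, A ∈ Γ) ∧ CSMS (bigOr (L.map .neg))

def Consistent (Γ : Set CSLForm) : Prop := ¬ Inconsistent Γ

def MaxConsistent (Γ : Set CSLForm) : Prop :=
  Consistent Γ ∧ ∀ A, A ∉ Γ → Inconsistent (insert A Γ)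

/-- w^A = {¬B | (A ⇇ B) ∈ w}. -/
def projSet (w : Set CSLForm) (A : CSLForm) : Set CSLForm :=
  {F | ∃ B, F = CSLForm.neg B ∧ (A.cls B) ∈ w}

/-- R(x,y) iff every A ∈ y satisfies (A ⇇ ⊥) ∈ x. -/
def Rrel (x y : Set CSLForm) : Prop := ∀ A, A ∈ y → (A.cls .bot) ∈ x

/-- The canonical preferential relation: x ≺_w y iff
∃ B ∈ y such that ∀ A ∈ x, (A ⇇ B) ∈ w. -/
def canonPrec (w x y : Set CSLForm) : Prop :=
  ∃ B, B ∈ y ∧ ∀ A, A ∈ x → (A.cls B) ∈ w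

section Infra
open CSLForm

deriving instance DecidableEq for CSLForm

variable {v : CSLForm → Bool}

lemma v_top (hv : IsBoolVal v) : v CSLForm.top = true := by
  simp [CSLForm.top, hv.2.1, hv.1]

lemma v_or (hv : IsBoolVal v) (A B : CSLForm) : v (A.or B) = (v A || v B) := by
  simp [CSLForm.or, hv.2.1, hv.2.2]

lemma v_imp (hv : IsBoolVal v) (A B : CSLForm) : v (A.imp B) = (!v A || v B) := by
  simp [CSLForm.imp, v_or hv, hv.2.1]

lemma v_bigAnd (hv : IsBoolVal v) : ∀ L : List CSLForm, v (bigAnd L) = L.all (fun F => v F)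
  | [] => by simp [bigAnd, v_top hv]
  | [A] => by simp [bigAnd]
  | A::B::rest => by
      simp [bigAnd, hv.2.2, v_bigAnd hv (B::rest)]

lemma v_bigOrNeg (hv : IsBoolVal v) : ∀ L : List CSLForm,
    v (bigOr (L.map .neg)) = L.any (fun F => !v F)
  | [] => by simp [bigOr, hv.1]
  | [A] => by simp [bigOr, hv.2.1]
  | A::B::rest => by
      have := v_bigOrNeg hv (B::rest)
      simp only [List.map] at this ⊢
      simp [bigOr, v_or hv, hv.2.1, this]

/-- single-point interpretation, to show CSMS is nondegenerate -/
def hEval : CSLForm → Bool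
  | .var _ => false
  | .bot => false
  | .neg A => !hEval A
  | .and A B => hEval A && hEval B
  | .cls A B => hEval A && !hEval B

lemma hEval_boolval : IsBoolVal hEval := ⟨rfl, fun _ => rfl, fun _ _ => rfl⟩

lemma hEval_sound {A : CSLForm} (h : CSMS A) : hEval A = true := by
  induction h with
  | taut h => exact h hEval hEval_boolval
  | mp h1 h2 ih1 ih2 =>
      rw [v_imp hEval_boolval] at ih1
      simp [ih2] at ih1
      exact ih1
  | mon C h ih =>
      rename_i A B
      rw [v_imp hEval_boolval] at ih ⊢
      simp only [hEval] at *
      cases hA : hEval A <;> cases hB : hEval B <;> cases hC : hEval C <;> simp_all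
  | ax1 A B =>
      simp only [v_or hEval_boolval, hEval]
      cases hEval A <;> cases hEval B <;> rfl
  | ax2 A B C =>
      simp only [v_imp hEval_boolval, v_or hEval_boolval, hEval]
      cases hEval A <;> cases hEval B <;> cases hEval C <;> rfl
  | ax3 A B =>
      simp only [v_imp hEval_boolval, hEval]
      cases hEval A <;> cases hEval B <;> rfl
  | ax4 A B =>
      simp only [v_imp hEval_boolval, hEval]
      cases hEval A <;> cases hEval B <;> rfl
  | ax5 A B C =>
      simp only [v_imp hEval_boolval, v_or hEval_boolval, hEval]
      cases hEval A <;> cases hEval B <;> cases hEval C <;> rfl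
  | ax6 A =>
      simp only [v_imp hEval_boolval, hEval]
      cases hEval A <;> rfl

lemma not_csms_top_imp_bot : ¬ CSMS (CSLForm.top.imp .bot) := by
  intro h
  have := hEval_sound h
  simp [v_imp hEval_boolval, v_top hEval_boolval, hEval] at this

end Infra
section Infra2
open CSLForm

/-- helper: modus ponens twice / thrice -/
lemma CSMS.mp2 {P Q R : CSLForm} (h : CSMS (P.imp (Q.imp R))) (hp : CSMS P) (hq : CSMS Q) :
    CSMS R := CSMS.mp (CSMS.mp h hp) hq

lemma CSMS.mp3 {P Q R S : CSLForm} (h : CSMS (P.imp (Q.imp (R.imp S))))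
    (hp : CSMS P) (hq : CSMS Q) (hr : CSMS R) : CSMS S :=
  CSMS.mp (CSMS.mp2 h hp hq) hr

lemma imp_trans {P Q R : CSLForm} (h1 : CSMS (P.imp Q)) (h2 : CSMS (Q.imp R)) :
    CSMS (P.imp R) := by
  refine CSMS.mp2 (CSMS.taut ?_) h1 h2
  intro v hv
  simp only [v_imp hv]
  cases v P <;> cases v Q <;> cases v R <;> rfl

lemma notRefl (A : CSLForm) : CSMS ((A.cls A).neg) := by
  refine CSMS.mp (CSMS.taut ?_) (CSMS.ax1 A A)
  intro v hv
  simp only [v_imp hv, v_or hv, hv.2.1]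
  cases v (A.cls A) <;> rfl

lemma rightAnti {X Y : CSLForm} (A : CSLForm) (h : CSMS (X.imp Y)) :
    CSMS ((A.cls Y).imp (A.cls X)) := by
  refine CSMS.mp3 (CSMS.taut ?_) (CSMS.ax2 A Y X) (CSMS.mon Y h) (notRefl Y)
  intro v hv
  simp only [v_imp hv, v_or hv, hv.2.1]
  cases v (A.cls Y) <;> cases v (A.cls X) <;> cases v (X.cls Y) <;> cases v (Y.cls Y) <;> rfl

lemma notBotCls (C : CSLForm) : CSMS ((CSLForm.cls .bot C).neg) := by
  have h1 : CSMS ((CSLForm.cls .bot C).imp (C.cls C)) := by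
    refine CSMS.mon C (CSMS.taut ?_)
    intro v hv
    simp only [v_imp hv, hv.1]
    rfl
  refine CSMS.mp2 (CSMS.taut ?_) h1 (notRefl C)
  intro v hv
  simp only [v_imp hv, hv.2.1]
  cases v (CSLForm.cls .bot C) <;> cases v (C.cls C) <;> rfl

lemma bigAnd_elim {L : List CSLForm} {F : CSLForm} (hF : F ∈ L) :
    CSMS ((bigAnd L).imp F) := by
  refine CSMS.taut ?_
  intro v hv
  simp only [v_imp hv, v_bigAnd hv]
  cases hall : L.all (fun F => v F)
  · rfl
  · have := (List.all_eq_true.1 hall) F hF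
    simp [this]

lemma imp_bigAnd {G : CSLForm} : ∀ {L : List CSLForm}, (∀ F ∈ L, CSMS (G.imp F)) →
    CSMS (G.imp (bigAnd L))
  | [], _ => by
      refine CSMS.taut ?_
      intro v hv
      simp only [bigAnd, v_imp hv, v_top hv]
      cases v G <;> rfl
  | [A], h => by simpa [bigAnd] using h A (by simp)
  | A::B::rest, h => by
      have h1 : CSMS (G.imp A) := h A (by simp)
      have h2 : CSMS (G.imp (bigAnd (B::rest))) :=
        imp_bigAnd (fun F hF => h F (by simp [hF]))
      show CSMS (G.imp ((CSLForm.and A (bigAnd (B::rest)))))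
      refine CSMS.mp2 (CSMS.taut ?_) h1 h2
      intro v hv
      simp only [v_imp hv, hv.2.2]
      cases v G <;> cases v A <;> cases v (bigAnd (B::rest)) <;> rfl

/-- provability from a context -/
def Prov (Γ : Set CSLForm) (A : CSLForm) : Prop :=
  ∃ L : List CSLForm, (∀ F ∈ L, F ∈ Γ) ∧ CSMS ((bigAnd L).imp A)

lemma prov_of_csms {Γ : Set CSLForm} {A : CSLForm} (h : CSMS A) : Prov Γ A := by
  refine ⟨[], by simp, ?_⟩
  refine CSMS.mp (CSMS.taut ?_) h
  intro v hv
  simp only [bigAnd, v_imp hv, v_top hv]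
  cases v A <;> rfl

lemma prov_of_mem {Γ : Set CSLForm} {A : CSLForm} (h : A ∈ Γ) : Prov Γ A :=
  ⟨[A], by simpa using h, by simpa [bigAnd] using bigAnd_elim (List.mem_singleton.2 rfl)⟩

lemma prov_mp {Γ : Set CSLForm} {A B : CSLForm} (h1 : Prov Γ (A.imp B)) (h2 : Prov Γ A) :
    Prov Γ B := by
  obtain ⟨L1, hL1, hc1⟩ := h1
  obtain ⟨L2, hL2, hc2⟩ := h2
  refine ⟨L1 ++ L2, by intro F hF; rcases List.mem_append.1 hF with h|h; exacts [hL1 F h, hL2 F h], ?_⟩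
  have e1 : CSMS ((bigAnd (L1++L2)).imp (bigAnd L1)) :=
    imp_bigAnd (fun F hF => bigAnd_elim (List.mem_append_left _ hF))
  have e2 : CSMS ((bigAnd (L1++L2)).imp (bigAnd L2)) :=
    imp_bigAnd (fun F hF => bigAnd_elim (List.mem_append_right _ hF))
  have f1 : CSMS ((bigAnd (L1++L2)).imp (A.imp B)) := imp_trans e1 hc1
  have f2 : CSMS ((bigAnd (L1++L2)).imp A) := imp_trans e2 hc2
  refine CSMS.mp2 (CSMS.taut ?_) f1 f2
  intro v hv
  simp only [v_imp hv]
  cases v (bigAnd (L1++L2)) <;> cases v A <;> cases v B <;> rfl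

lemma prov_mono {Γ Δ : Set CSLForm} {A : CSLForm} (h : Γ ⊆ Δ) (hp : Prov Γ A) : Prov Δ A := by
  obtain ⟨L, hL, hc⟩ := hp
  exact ⟨L, fun F hF => h (hL F hF), hc⟩

lemma prov_deduction {Γ : Set CSLForm} {A B : CSLForm} (h : Prov (insert A Γ) B) :
    Prov Γ (A.imp B) := by
  obtain ⟨L, hL, hc⟩ := h
  refine ⟨L.filter (fun F => F ≠ A), ?_, ?_⟩
  · intro F hF
    have := List.mem_filter.1 hF
    rcases hL F this.1 with h|h
    · simp [h] at this
    · exact h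
  · have key : CSMS (((bigAnd (L.filter (fun F => F ≠ A))).and A).imp (bigAnd L)) := by
      refine imp_bigAnd (fun F hF => ?_)
      by_cases hFA : F = A
      · rw [hFA]
        refine CSMS.taut ?_
        intro v hv
        simp only [v_imp hv, hv.2.2]
        cases v (bigAnd (L.filter (fun F => F ≠ A))) <;> cases v A <;> simp
      · have hmem : F ∈ L.filter (fun F => F ≠ A) := List.mem_filter.2 ⟨hF, by simp [hFA]⟩
        have e1 : CSMS (((bigAnd (L.filter (fun F => F ≠ A))).and A).imp
            (bigAnd (L.filter (fun F => F ≠ A)))) := by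
          refine CSMS.taut ?_
          intro v hv
          simp only [v_imp hv, hv.2.2]
          cases v (bigAnd (L.filter (fun F => F ≠ A))) <;> cases v A <;> rfl
        exact imp_trans e1 (bigAnd_elim hmem)
    have key2 : CSMS (((bigAnd (L.filter (fun F => F ≠ A))).and A).imp B) := imp_trans key hc
    refine CSMS.mp (CSMS.taut ?_) key2
    intro v hv
    simp only [v_imp hv, hv.2.2]
    cases v (bigAnd (L.filter (fun F => F ≠ A))) <;> cases v A <;> cases v B <;> rfl

lemma incons_iff_prov_bot {Γ : Set CSLForm} : Inconsistent Γ ↔ Prov Γ .bot := by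
  constructor
  · rintro ⟨L, _, hmem, hpf⟩
    refine ⟨L, hmem, ?_⟩
    refine CSMS.mp (CSMS.taut ?_) hpf
    intro v hv
    simp only [v_imp hv, v_bigOrNeg hv, v_bigAnd hv, hv.1]
    cases hall : L.all (fun F => v F)
    · have : ∃ F ∈ L, ¬ v F = true := by
        by_contra hcon
        push_neg at hcon
        rw [List.all_eq_true.2 (by exact_mod_cast hcon)] at hall
        cases hall
      obtain ⟨F, hF, hvF⟩ := this
      have : L.any (fun F => !v F) = true :=
        List.any_eq_true.2 ⟨F, hF, by simp [Bool.eq_false_iff.2 hvF]⟩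
      simp [this]
    · have : L.any (fun F => !v F) = false := by
        rw [List.any_eq_false]
        intro F hF
        simp [List.all_eq_true.1 hall F hF]
      simp [this, hall]
  · rintro ⟨L, hmem, hpf⟩
    rcases L with _ | ⟨A, L'⟩
    · exact absurd (by simpa [bigAnd] using hpf) not_csms_top_imp_bot
    · refine ⟨A::L', by simp, hmem, ?_⟩
      refine CSMS.mp (CSMS.taut ?_) hpf
      intro v hv
      simp only [v_imp hv, v_bigOrNeg hv, v_bigAnd hv, hv.1]
      cases hall : (A::L').all (fun F => v F)
      · have : ∃ F ∈ (A::L'), ¬ v F = true := by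
          by_contra hcon
          push_neg at hcon
          rw [List.all_eq_true.2 (by exact_mod_cast hcon)] at hall
          cases hall
        obtain ⟨F, hF, hvF⟩ := this
        have : (A::L').any (fun F => !v F) = true :=
          List.any_eq_true.2 ⟨F, hF, by simp [Bool.eq_false_iff.2 hvF]⟩
        simp [this]
      · simp

end Infra2
section Infra3
open CSLForm

variable {x : Set CSLForm}

lemma mem_of_prov (hx : MaxConsistent x) {A : CSLForm} (h : Prov x A) : A ∈ x := by
  by_contra hA
  have h1 : Prov (insert A x) .bot := incons_iff_prov_bot.1 (hx.2 A hA)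
  have h2 : Prov x (A.imp .bot) := prov_deduction h1
  exact hx.1 (incons_iff_prov_bot.2 (prov_mp h2 h))

lemma mcs_thm (hx : MaxConsistent x) {A : CSLForm} (h : CSMS A) : A ∈ x :=
  mem_of_prov hx (prov_of_csms h)

lemma mcs_mp (hx : MaxConsistent x) {A B : CSLForm} (h1 : A.imp B ∈ x) (h2 : A ∈ x) : B ∈ x :=
  mem_of_prov hx (prov_mp (prov_of_mem h1) (prov_of_mem h2))

lemma mcs_bot (hx : MaxConsistent x) : (CSLForm.bot) ∉ x := fun h =>
  hx.1 (incons_iff_prov_bot.2 (prov_of_mem h))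

lemma mcs_neg_iff (hx : MaxConsistent x) {A : CSLForm} : A.neg ∈ x ↔ A ∉ x := by
  constructor
  · intro hn hA
    have t : CSMS (A.neg.imp (A.imp .bot)) := by
      refine CSMS.taut ?_
      intro v hv
      simp only [v_imp hv, hv.2.1, hv.1]
      cases v A <;> rfl
    exact mcs_bot hx (mcs_mp hx (mcs_mp hx (mcs_thm hx t) hn) hA)
  · intro hA
    have h2 : Prov x (A.imp .bot) := prov_deduction (incons_iff_prov_bot.1 (hx.2 A hA))
    have t : CSMS ((A.imp .bot).imp A.neg) := by
      refine CSMS.taut ?_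
      intro v hv
      simp only [v_imp hv, hv.2.1, hv.1]
      cases v A <;> rfl
    exact mem_of_prov hx (prov_mp (prov_of_csms t) h2)

lemma mcs_and_iff (hx : MaxConsistent x) {A B : CSLForm} :
    A.and B ∈ x ↔ A ∈ x ∧ B ∈ x := by
  constructor
  · intro h
    have t1 : CSMS ((A.and B).imp A) := by
      refine CSMS.taut ?_
      intro v hv
      simp only [v_imp hv, hv.2.2]
      cases v A <;> cases v B <;> rfl
    have t2 : CSMS ((A.and B).imp B) := by
      refine CSMS.taut ?_
      intro v hv
      simp only [v_imp hv, hv.2.2]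
      cases v A <;> cases v B <;> rfl
    exact ⟨mcs_mp hx (mcs_thm hx t1) h, mcs_mp hx (mcs_thm hx t2) h⟩
  · rintro ⟨h1, h2⟩
    have t : CSMS (A.imp (B.imp (A.and B))) := by
      refine CSMS.taut ?_
      intro v hv
      simp only [v_imp hv, hv.2.2]
      cases v A <;> cases v B <;> rfl
    exact mcs_mp hx (mcs_mp hx (mcs_thm hx t) h1) h2

lemma mcs_or_iff (hx : MaxConsistent x) {A B : CSLForm} :
    A.or B ∈ x ↔ A ∈ x ∨ B ∈ x := by
  constructor
  · intro h
    by_contra hcon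
    push_neg at hcon
    have hA : A.neg ∈ x := (mcs_neg_iff hx).2 hcon.1
    have hB : B.neg ∈ x := (mcs_neg_iff hx).2 hcon.2
    have t : CSMS (A.neg.imp (B.neg.imp ((A.or B).neg))) := by
      refine CSMS.taut ?_
      intro v hv
      simp only [v_imp hv, v_or hv, hv.2.1]
      cases v A <;> cases v B <;> rfl
    have := mcs_mp hx (mcs_mp hx (mcs_thm hx t) hA) hB
    exact (mcs_neg_iff hx).1 this h
  · intro h
    have t1 : CSMS (A.imp (A.or B)) := by
      refine CSMS.taut ?_
      intro v hv
      simp only [v_imp hv, v_or hv]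
      cases v A <;> cases v B <;> rfl
    have t2 : CSMS (B.imp (A.or B)) := by
      refine CSMS.taut ?_
      intro v hv
      simp only [v_imp hv, v_or hv]
      cases v A <;> cases v B <;> rfl
    rcases h with h|h
    · exact mcs_mp hx (mcs_thm hx t1) h
    · exact mcs_mp hx (mcs_thm hx t2) h

/-- if (X ∨ Y) ⇇ C belongs to an MCS then one of the disjuncts does -/
lemma orSplitMem (hx : MaxConsistent x) {X Y C : CSLForm}
    (h : (CSLForm.cls (X.or Y) C) ∈ x) : (X.cls C) ∈ x ∨ (Y.cls C) ∈ x := by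
  by_contra hcon
  push_neg at hcon
  have h1 : ((CSLForm.cls (X.or Y) X).or (X.cls C)) ∈ x :=
    mcs_mp hx (mcs_thm hx (CSMS.ax2 (X.or Y) C X)) h
  have h2 : ((CSLForm.cls (X.or Y) Y).or (Y.cls C)) ∈ x :=
    mcs_mp hx (mcs_thm hx (CSMS.ax2 (X.or Y) C Y)) h
  have g1 : (CSLForm.cls (X.or Y) X) ∈ x := by
    rcases (mcs_or_iff hx).1 h1 with h|h
    · exact h
    · exact absurd h hcon.1
  have g2 : (CSLForm.cls (X.or Y) Y) ∈ x := by
    rcases (mcs_or_iff hx).1 h2 with h|h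
    · exact h
    · exact absurd h hcon.2
  have gand : ((CSLForm.cls (X.or Y) X).and (CSLForm.cls (X.or Y) Y)) ∈ x :=
    (mcs_and_iff hx).2 ⟨g1, g2⟩
  have g3 : (CSLForm.cls (X.or Y) (X.or Y)) ∈ x :=
    mcs_mp hx (mcs_thm hx (CSMS.ax5 (X.or Y) X Y)) gand
  exact (mcs_neg_iff hx).1 (mcs_thm hx (notRefl (X.or Y))) g3

end Infra3
section Infra4
open CSLForm

variable {z w x : Set CSLForm}

/-- within an MCS, every member F gives (F ⇇ ⊥) ∈ x (axiom 3) -/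
lemma clsBot_of_mem (hx : MaxConsistent x) {F : CSLForm} (h : F ∈ x) :
    (F.cls .bot) ∈ x := by
  have hnb : (CSLForm.neg .bot) ∈ x := by
    refine mcs_thm hx (CSMS.taut ?_)
    intro v hv
    simp [hv.2.1, hv.1]
  exact mcs_mp hx (mcs_thm hx (CSMS.ax3 F .bot)) ((mcs_and_iff hx).2 ⟨h, hnb⟩)

/-- T1: ((A ⇇ ⊥) ⇇ ⊥) ∈ z implies (A ⇇ ⊥) ∈ z -/
lemma clsBot_absorb (hz : MaxConsistent z) {A : CSLForm}
    (h : (CSLForm.cls (A.cls .bot) .bot) ∈ z) : (A.cls .bot) ∈ z := by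
  by_contra h0
  have hN : (A.cls .bot).neg ∈ z := (mcs_neg_iff hz).2 h0
  have hY : (CSLForm.cls ((A.cls .bot).neg) .bot) ∈ z := clsBot_of_mem hz hN
  -- Mon ⊥ applied to ax6 A
  have hmon : CSMS ((CSLForm.cls (A.cls .bot) .bot).imp
      (CSLForm.cls (((A.cls .bot).neg.cls .bot).neg) .bot)) :=
    CSMS.mon .bot (CSMS.ax6 A)
  have hNY : (CSLForm.cls ((CSLForm.cls ((A.cls .bot).neg) .bot).neg) .bot) ∈ z :=
    mcs_mp hz (mcs_thm hz hmon) h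
  -- ax6 with A := (A ⇇ ⊥).neg
  have h6 := mcs_mp hz (mcs_thm hz (CSMS.ax6 ((A.cls .bot).neg))) hY
  exact (mcs_neg_iff hz).1 h6 hNY

/-- T2: transfer (E ⇇ ⊥) from a world related to z up to z -/
lemma clsBot_up (hz : MaxConsistent z) (hR : Rrel z w) {E : CSLForm}
    (h : (E.cls .bot) ∈ w) : (E.cls .bot) ∈ z :=
  clsBot_absorb hz (hR _ h)

/-- T3: transfer (E ⇇ ⊥) from z down to any related world -/
lemma clsBot_down (hz : MaxConsistent z) (hw : MaxConsistent w) (hR : Rrel z w)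
    {E : CSLForm} (h : (E.cls .bot) ∈ z) : (E.cls .bot) ∈ w := by
  by_contra h0
  have hN : (E.cls .bot).neg ∈ w := (mcs_neg_iff hw).2 h0
  have hw1 : (CSLForm.cls ((E.cls .bot).neg) .bot) ∈ w := clsBot_of_mem hw hN
  have hz1 : (CSLForm.cls ((E.cls .bot).neg) .bot) ∈ z := clsBot_absorb hz (hR _ hw1)
  have h6 := mcs_mp hz (mcs_thm hz (CSMS.ax6 E)) h
  exact (mcs_neg_iff hz).1 h6 hz1

/-- a chain member containing all elements of a finite list -/
lemma chain_list_bound {c : Set (Set CSLForm)} (hchain : IsChain (· ⊆ ·) c)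
    (hne : c.Nonempty) : ∀ L : List CSLForm, (∀ F ∈ L, F ∈ ⋃₀ c) →
      ∃ t ∈ c, ∀ F ∈ L, F ∈ t := by
  intro L
  induction L with
  | nil => exact fun _ => ⟨hne.choose, hne.choose_spec, by simp⟩
  | cons A rest ih =>
      intro h
      obtain ⟨t, htc, ht⟩ := ih (fun F hF => h F (by simp [hF]))
      obtain ⟨s, hsc, hAs⟩ := h A (by simp)
      rcases eq_or_ne s t with rfl|hst
      · refine ⟨s, hsc, fun F hF => ?_⟩
        rcases List.mem_cons.1 hF with rfl|hF'
        exacts [hAs, ht F hF']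
      rcases hchain hsc htc hst with hsub|hsub
      · refine ⟨t, htc, fun F hF => ?_⟩
        rcases List.mem_cons.1 hF with rfl|hF'
        exacts [hsub hAs, ht F hF']
      · refine ⟨s, hsc, fun F hF => ?_⟩
        rcases List.mem_cons.1 hF with rfl|hF'
        exacts [hAs, hsub (ht F hF')]

/-- Lindenbaum construction with an invariant -/
lemma lindenbaum_inv (Inv : CSLForm → Prop)
    (mono : ∀ {F F'}, CSMS (F.imp F') → Inv F → Inv F')
    (split : ∀ F D, Inv F → Inv (F.and D) ∨ Inv (F.and D.neg))
    (cons : ∀ F, Inv F → ¬ CSMS (F.imp .bot))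
    (B₀ : CSLForm) (hB : Inv B₀) :
    ∃ x : Set CSLForm, MaxConsistent x ∧ B₀ ∈ x ∧ ∀ F ∈ x, Inv F := by
  classical
  set S : Set (Set CSLForm) :=
    {Γ | B₀ ∈ Γ ∧ ∀ L : List CSLForm, (∀ F ∈ L, F ∈ Γ) → Inv (bigAnd L)} with hS
  have hseed : {B₀} ∈ S := by
    refine ⟨rfl, fun L hL => ?_⟩
    refine mono (imp_bigAnd (fun F hF => ?_)) hB
    have : F = B₀ := hL F hF
    rw [this]
    refine CSMS.taut ?_
    intro v hv
    simp only [v_imp hv]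
    cases v B₀ <;> rfl
  have hchain_cond : ∀ c ⊆ S, IsChain (· ⊆ ·) c → c.Nonempty →
      ∃ ub ∈ S, ∀ s ∈ c, s ⊆ ub := by
    intro c hcS hchain hcne
    refine ⟨⋃₀ c, ⟨?_, ?_⟩, fun s hs => Set.subset_sUnion_of_mem hs⟩
    · obtain ⟨t, htc⟩ := hcne
      exact Set.mem_sUnion.2 ⟨t, htc, (hcS htc).1⟩
    · intro L hL
      obtain ⟨t, htc, ht⟩ := chain_list_bound hchain hcne L hL
      exact (hcS htc).2 L ht
  obtain ⟨m, hm0, hmax⟩ := zorn_subset_nonempty S hchain_cond {B₀} hseed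
  have hmS : m ∈ S := hmax.1
  have hInvm : ∀ F ∈ m, Inv F := fun F hF => hmS.2 [F] (by simpa using hF)
  have hcons : Consistent m := by
    rintro ⟨L, hLne, hLmem, hpf⟩
    have h1 : CSMS ((bigAnd L).imp .bot) := by
      refine CSMS.mp (CSMS.taut ?_) hpf
      intro v hv
      simp only [v_imp hv, v_bigOrNeg hv, v_bigAnd hv, hv.1]
      cases hany : L.any (fun F => !v F)
      · have : L.all (fun F => v F) = true := by
          rw [List.all_eq_true]
          intro F hF
          have := List.any_eq_false.1 (by exact_mod_cast hany) F hF
          simpa using this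
        simp [this]
      · have : L.all (fun F => v F) = false := by
          obtain ⟨F, hF, hvF⟩ := List.any_eq_true.1 hany
          rw [List.all_eq_false]
          exact ⟨F, hF, by simpa using hvF⟩
        simp [this]
    exact cons _ (hmS.2 L hLmem) h1
  have hcomplete : ∀ D, D ∉ m → D.neg ∈ m := by
    intro D hD
    by_contra hnD
    -- both extensions leave S
    have hfail : ∀ E, E ∉ m → ∃ L : List CSLForm,
        (∀ F ∈ L, F ∈ insert E m) ∧ ¬ Inv (bigAnd L) := by
      intro E hE
      by_contra hcon
      push_neg at hcon
      have hmem : insert E m ∈ S :=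
        ⟨Set.mem_insert_of_mem _ hmS.1, fun L hL => hcon L hL⟩
      have := hmax.2 hmem (Set.subset_insert _ _)
      exact hE (this (Set.mem_insert _ _))
    obtain ⟨L1, hL1, hnI1⟩ := hfail D hD
    obtain ⟨L2, hL2, hnI2⟩ := hfail D.neg hnD
    set L0 : List CSLForm :=
      L1.filter (fun F => F ≠ D) ++ L2.filter (fun F => F ≠ D.neg) with hL0
    have hL0m : ∀ F ∈ L0, F ∈ m := by
      intro F hF
      rcases List.mem_append.1 hF with h|h
      · have := List.mem_filter.1 h
        rcases hL1 F this.1 with h'|h'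
        · simp [h'] at this
        · exact h'
      · have := List.mem_filter.1 h
        rcases hL2 F this.1 with h'|h'
        · simp [h'] at this
        · exact h'
    have hInvG : Inv (bigAnd L0) := hmS.2 L0 hL0m
    have himp1 : CSMS (((bigAnd L0).and D).imp (bigAnd L1)) := by
      refine imp_bigAnd (fun F hF => ?_)
      by_cases hFD : F = D
      · rw [hFD]
        refine CSMS.taut ?_
        intro v hv
        simp only [v_imp hv, hv.2.2]
        cases v (bigAnd L0) <;> cases v D <;> simp
      · have hmem : F ∈ L0 := List.mem_append.2 (Or.inl (List.mem_filter.2 ⟨hF, by simp [hFD]⟩))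
        have e1 : CSMS (((bigAnd L0).and D).imp (bigAnd L0)) := by
          refine CSMS.taut ?_
          intro v hv
          simp only [v_imp hv, hv.2.2]
          cases v (bigAnd L0) <;> cases v D <;> simp
        exact imp_trans e1 (bigAnd_elim hmem)
    have himp2 : CSMS (((bigAnd L0).and D.neg).imp (bigAnd L2)) := by
      refine imp_bigAnd (fun F hF => ?_)
      by_cases hFD : F = D.neg
      · rw [hFD]
        refine CSMS.taut ?_
        intro v hv
        simp only [v_imp hv, hv.2.2]
        cases v (bigAnd L0) <;> cases v D.neg <;> simp
      · have hmem : F ∈ L0 := List.mem_append.2 (Or.inr (List.mem_filter.2 ⟨hF, by simp [hFD]⟩))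
        have e1 : CSMS (((bigAnd L0).and D.neg).imp (bigAnd L0)) := by
          refine CSMS.taut ?_
          intro v hv
          simp only [v_imp hv, hv.2.2]
          cases v (bigAnd L0) <;> cases v D.neg <;> simp
        exact imp_trans e1 (bigAnd_elim hmem)
    rcases split (bigAnd L0) D hInvG with h|h
    · exact hnI1 (mono himp1 h)
    · exact hnI2 (mono himp2 h)
  refine ⟨m, ⟨hcons, fun A hA => ?_⟩, hm0 rfl, hInvm⟩
  · refine ⟨[A, A.neg], by simp, ?_, ?_⟩
    · intro F hF
      rcases List.mem_cons.1 hF with rfl|hF'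
      · exact Set.mem_insert _ _
      · rcases List.mem_cons.1 hF' with rfl|h''
        · exact Set.mem_insert_of_mem _ (hcomplete A hA)
        · simp at h''
    · show CSMS (bigOr [A.neg, A.neg.neg])
      show CSMS ((A.neg).or (bigOr [A.neg.neg]))
      refine CSMS.taut ?_
      intro v hv
      simp only [bigOr, v_or hv, hv.2.1]
      cases v A <;> rfl

end Infra4
/-- truth lemma: in the canonical model over a maximal
consistent set z, with domain Δ = {x | MaxConsistent x ∧ R z x},
the semantic extension of every formula A equals ‖A‖ = {x ∈ Δ | A ∈ x}. -/
theorem canonical_truth_lemma (z : Set CSLForm) (hz : MaxConsistent z) :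
    ∀ A : CSLForm,
      prefEval (W := {x : Set CSLForm // MaxConsistent x ∧ Rrel z x})
          (fun w x y => canonPrec w.1 x.1 y.1)
          (fun i => {x | CSLForm.var i ∈ x.1}) A
        = {x | A ∈ x.1} := by
  intro A
  induction A with
  | var i => rfl
  | bot =>
      ext x
      simp only [prefEval, Set.mem_empty_iff_false, Set.mem_setOf_eq, false_iff]
      exact mcs_bot x.2.1
  | neg A ih =>
      ext x
      simp only [prefEval, ih, Set.mem_compl_iff, Set.mem_setOf_eq]
      exact Iff.symm (mcs_neg_iff x.2.1)
  | and A B ihA ihB =>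
      ext x
      simp only [prefEval, ihA, ihB, Set.mem_inter_iff, Set.mem_setOf_eq]
      exact Iff.symm (mcs_and_iff x.2.1)
  | cls B C ihB ihC =>
      ext w
      have hw : MaxConsistent w.1 := w.2.1
      simp only [prefEval, ihB, ihC, Set.mem_setOf_eq]
      constructor
      · -- semantic → membership
        rintro ⟨x0, hBx0, hall⟩
        by_contra hn
        by_cases hCz : (C.cls .bot) ∈ z
        · -- build y with C ∈ y avoiding canonPrec
          set Inv2 : CSLForm → Prop :=
            fun F => (F.cls .bot) ∈ z ∧ ∃ A, A ∈ x0.1 ∧ (A.cls F) ∉ w.1 with hInv2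
          have mono : ∀ {F F'}, CSMS (F.imp F') → Inv2 F → Inv2 F' := by
            intro F F' h hF
            refine ⟨mcs_mp hz (mcs_thm hz (CSMS.mon .bot h)) hF.1, ?_⟩
            obtain ⟨A, hAx, hAn⟩ := hF.2
            exact ⟨A, hAx, fun hmem => hAn (mcs_mp hw (mcs_thm hw (rightAnti A h)) hmem)⟩
          have cons : ∀ F, Inv2 F → ¬ CSMS (F.imp .bot) := by
            intro F hF hbot
            have hbb : (CSLForm.cls .bot .bot) ∈ z :=
              mcs_mp hz (mcs_thm hz (CSMS.mon .bot hbot)) hF.1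
            exact (mcs_neg_iff hz).1 (mcs_thm hz (notRefl .bot)) hbb
          have split : ∀ F D, Inv2 F → Inv2 (F.and D) ∨ Inv2 (F.and D.neg) := by
            intro F D hF
            set X := F.and D with hX
            set Y := F.and D.neg with hY
            have hFXY : CSMS (F.imp (X.or Y)) := by
              refine CSMS.taut ?_
              intro v hv
              simp only [hX, hY, v_imp hv, v_or hv, hv.2.2, hv.2.1]
              cases v F <;> cases v D <;> rfl
            have hzor : (CSLForm.cls (X.or Y) .bot) ∈ z :=
              mcs_mp hz (mcs_thm hz (CSMS.mon .bot hFXY)) hF.1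
            have hzsplit := orSplitMem hz hzor
            obtain ⟨A, hAx, hAn⟩ := hF.2
            have hnotboth : (A.cls X) ∉ w.1 ∨ (A.cls Y) ∉ w.1 := by
              by_contra hc
              push_neg at hc
              have h5 : (A.cls (X.or Y)) ∈ w.1 :=
                mcs_mp hw (mcs_thm hw (CSMS.ax5 A X Y)) ((mcs_and_iff hw).2 hc)
              exact hAn (mcs_mp hw (mcs_thm hw (rightAnti A hFXY)) h5)
            have hforce : ∀ S : CSLForm, (S.cls .bot) ∉ z → (A.cls S) ∈ w.1 := by
              intro S hS
              have hAz : (A.cls .bot) ∈ z := x0.2.2 A hAx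
              have hAw : (A.cls .bot) ∈ w.1 := clsBot_down hz hw w.2.2 hAz
              have h2 := mcs_mp hw (mcs_thm hw (CSMS.ax2 A .bot S)) hAw
              rcases (mcs_or_iff hw).1 h2 with h|h
              · exact h
              · exact absurd (clsBot_up hz w.2.2 h) hS
            by_cases hzX : (X.cls .bot) ∈ z
            · by_cases hzY : (Y.cls .bot) ∈ z
              · rcases hnotboth with h|h
                · exact Or.inl ⟨hzX, A, hAx, h⟩
                · exact Or.inr ⟨hzY, A, hAx, h⟩
              · have hfY := hforce Y hzY
                rcases hnotboth with h|h
                · exact Or.inl ⟨hzX, A, hAx, h⟩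
                · exact absurd hfY h
            · have hzY : (Y.cls .bot) ∈ z := by
                rcases hzsplit with h|h
                exacts [absurd h hzX, h]
              have hfX := hforce X hzX
              rcases hnotboth with h|h
              · exact absurd hfX h
              · exact Or.inr ⟨hzY, A, hAx, h⟩
          obtain ⟨y0, hy0M, hCy0, hInv⟩ :=
            lindenbaum_inv Inv2 mono split cons C ⟨hCz, B, hBx0, hn⟩
          have hRy : Rrel z y0 := fun F hF => (hInv F hF).1
          obtain ⟨B', hB'y, hAll⟩ := hall ⟨y0, hy0M, hRy⟩ hCy0
          obtain ⟨A, hAx, hAn⟩ := (hInv B' hB'y).2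
          exact hAn (hAll A hAx)
        · -- C is impossible, so B ⇇ C follows from B ⇇ ⊥
          have hBz : (B.cls .bot) ∈ z := x0.2.2 B hBx0
          have hBw : (B.cls .bot) ∈ w.1 := clsBot_down hz hw w.2.2 hBz
          have h2 := mcs_mp hw (mcs_thm hw (CSMS.ax2 B .bot C)) hBw
          rcases (mcs_or_iff hw).1 h2 with h|h
          · exact hn h
          · exact hCz (clsBot_up hz w.2.2 h)
      · -- membership → semantic
        intro hmem
        set Inv1 : CSLForm → Prop := fun F => (F.cls C) ∈ w.1 with hInv1
        have mono : ∀ {F F'}, CSMS (F.imp F') → Inv1 F → Inv1 F' :=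
          fun h hF => mcs_mp hw (mcs_thm hw (CSMS.mon C h)) hF
        have cons : ∀ F, Inv1 F → ¬ CSMS (F.imp .bot) := by
          intro F hF hbot
          have : (CSLForm.cls .bot C) ∈ w.1 :=
            mcs_mp hw (mcs_thm hw (CSMS.mon C hbot)) hF
          exact (mcs_neg_iff hw).1 (mcs_thm hw (notBotCls C)) this
        have split : ∀ F D, Inv1 F → Inv1 (F.and D) ∨ Inv1 (F.and D.neg) := by
          intro F D hF
          have hFXY : CSMS (F.imp ((F.and D).or (F.and D.neg))) := by
            refine CSMS.taut ?_
            intro v hv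
            simp only [v_imp hv, v_or hv, hv.2.2, hv.2.1]
            cases v F <;> cases v D <;> rfl
          exact orSplitMem hw (mono hFXY hF)
        obtain ⟨x0, hx0M, hBx0, hInv⟩ := lindenbaum_inv Inv1 mono split cons B hmem
        have hRx : Rrel z x0 := by
          intro F hF
          have h2 := mcs_mp hw (mcs_thm hw (CSMS.ax2 F C .bot)) (hInv F hF)
          rcases (mcs_or_iff hw).1 h2 with h|h
          · exact clsBot_up hz w.2.2 h
          · exact absurd h ((mcs_neg_iff hw).1 (mcs_thm hw (notBotCls C)))
        exact ⟨⟨x0, hx0M, hRx⟩, hBx0, fun y hy => ⟨C, hy, fun A hA => hInv A hA⟩⟩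
end

section
/- In every CSL-preferential model M: w ∈ (A ⇇ B)^M if and only if A^M ≠ ∅ and for every y ∈ Δ, either y ∉ B^M or y ∈ (¬□_w ¬A)^M, where the pseudo-modality □_w is interpreted by x ∈ (□_w C)^M iff for all y, y ≺_w x implies y ∈ C^M. -/
/-- in every CSL-preferential model,
w ∈ (A ⇇ B)^M iff A^M ≠ ∅ and every y is either not in B^M or in (¬□_w ¬A)^M,
where x ∈ (□_w C)^M iff every z ≺_w x is in C^M. -/
theorem cls_iff_box {W : Type} (M : CSLPrefModel W) (A B : CSLForm) (w : W) :
    w ∈ M.eval (A.cls B) ↔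
      (M.eval A).Nonempty ∧
      ∀ y : W, y ∉ M.eval B ∨
        y ∈ ({x : W | ∀ z : W, M.pref w z x → z ∈ (M.eval A)ᶜ})ᶜ := by
  constructor
  · rintro ⟨x, hxA, hx⟩
    refine ⟨⟨x, hxA⟩, fun y => ?_⟩
    by_cases hy : y ∈ M.eval B
    · exact Or.inr (fun h => h x (hx y hy) hxA)
    · exact Or.inl hy
  · rintro ⟨hA, hB⟩
    obtain ⟨x, hxA, hxmin⟩ := M.limit w (M.eval A) hA
    refine ⟨x, hxA, fun y hy => ?_⟩
    rcases hB y with h | h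
    · exact absurd hy h
    · simp only [Set.mem_compl_iff, Set.mem_setOf_eq, not_forall] at h
      obtain ⟨z, hzy, hzA⟩ := h
      rw [not_not] at hzA
      rcases M.modular w z y x hzy with h' | h'
      · exact h'
      · exact absurd hzA (hxmin z h')
end
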